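/- arXiv:2401.02775 — 3 statements merged into one kernel-verified Lean document; each statement's English description precedes it below -/
import Mathlib

section
/- If Γ is a tree (a connected acyclic simple graph), then every bimorphism of Γ is an automorphism; that is, Bi(Γ) = Aut(Γ) for any tree Γ. -/
namespace SimpleGraph

variable {V W : Type*} {G : SimpleGraph V} {H : SimpleGraph W}

theorem IsAcyclic.adj_of_adj_map (hH : H.IsAcyclic) (φ : G →g H) (hφ : Function.Injective φ)
    {a b : V} (hab : G.Reachable a b) (hadj : H.Adj (φ a) (φ b)) : G.Adj a b := by
  classical
  obtain ⟨p⟩ := hab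
  -- The image of a path from `a` to `b` is a path, so by uniqueness it is the edge `φ a φ b`.
  have hp : p.toPath.map φ hφ = Path.singleton hadj := (hH.subsingleton_path _ _).elim _ _
  apply p.toPath.1.adj_of_length_eq_one
  simpa using congrArg (fun q : H.Path (φ a) (φ b) => q.1.length) hp

end SimpleGraph

/-- Every bimorphism (bijective adjacency-preserving self-map) of a tree is an
automorphism; that is, `Bi(Γ) = Aut(Γ)` for any tree `Γ`. -/
theorem tree_bimorphism_is_automorphism {V : Type*} {Γ : SimpleGraph V} (h : Γ.IsTree)
    (f : V → V) (hb : Function.Bijective f)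
    (hom : ∀ a b, Γ.Adj a b → Γ.Adj (f a) (f b)) :
    ∃ e : Γ ≃g Γ, ⇑e = f := by
  let φ : Γ →g Γ := ⟨f, hom _ _⟩
  refine ⟨⟨Equiv.ofBijective f hb, fun {a b} => ⟨?_, hom a b⟩⟩, rfl⟩
  exact h.isAcyclic.adj_of_adj_map φ hb.injective (h.connected a b)
end

section
/- Let Γ be the simple graph with vertex set ℤ × {0,1} and adjacency: (a,0) ∼ (b,1) iff a = b; (a,0) ∼ (b,0) iff |a − b| = 1; and (a,1) ∼ (b,1) iff a ≤ 0 and |a − b| = 1. Then a bijection β of the vertex set is a bimorphism of Γ if and only if there exists n ∈ ℕ (n ≥ 0) with (a,x)β = (a − n, x) for all vertices (a,x); consequently the bimorphism monoid Bi(Γ) is isomorphic to the additive monoid (ℕ, +) of natural numbers. -/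
/-- The graph on `ℤ × {0,1}` (with `false` playing the role of `0` and `true` of `1`):
`(a,0) ∼ (b,1)` iff `a = b`; `(a,0) ∼ (b,0)` iff `|a - b| = 1`; and `(a,1) ∼ (b,1)`
iff both coordinates are `≤ 0` and `|a - b| = 1`. -/
def GammaZ : SimpleGraph (ℤ × Bool) where
  Adj v w :=
    (v.2 = false ∧ w.2 = false ∧ |v.1 - w.1| = 1) ∨
    (v.2 ≠ w.2 ∧ v.1 = w.1) ∨
    (v.2 = true ∧ w.2 = true ∧ v.1 ≤ 0 ∧ w.1 ≤ 0 ∧ |v.1 - w.1| = 1)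
  symm := by
    constructor
    rintro ⟨a, i⟩ ⟨b, j⟩ (⟨hi, hj, h⟩ | ⟨hij, h⟩ | ⟨hi, hj, ha, hb, h⟩)
    · exact Or.inl ⟨hj, hi, by rw [abs_sub_comm]; exact h⟩
    · exact Or.inr (Or.inl ⟨Ne.symm hij, h.symm⟩)
    · exact Or.inr (Or.inr ⟨hj, hi, hb, ha, by rw [abs_sub_comm]; exact h⟩)
  loopless := by
    constructor
    rintro ⟨a, i⟩ (⟨_, _, h⟩ | ⟨hij, _⟩ | ⟨_, _, _, _, h⟩)
    · simp at h
    · exact hij rfl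
    · simp at h

/-- The bimorphism monoid of a simple graph `Γ`: the submonoid of `Function.End V`
(self-maps of the vertex set under composition) consisting of the bijective
self-maps that preserve adjacency. -/
def biSubmonoid {V : Type*} (Γ : SimpleGraph V) : Submonoid (Function.End V) where
  carrier := {f | Function.Bijective f ∧ ∀ a b, Γ.Adj a b → Γ.Adj (f a) (f b)}
  one_mem' := ⟨Function.bijective_id, fun _ _ h => h⟩
  mul_mem' := by
    rintro f g ⟨hf, hf'⟩ ⟨hg, hg'⟩
    exact ⟨hf.comp hg, fun a b h => hf' _ _ (hg' _ _ h)⟩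

/-! The vertices `(c, true)` with `1 ≤ c` are the leaves of `GammaZ`, and an injective
homomorphism cannot send a vertex with two neighbours to a leaf. So by surjectivity some leaf
`(m, true)` is mapped onto `(1, true)`; then `(m, false) ↦ (1, false)`, and the two bottom
neighbours of `(m, false)` go to `(0, false)` and `(2, false)`. As long as the image of the
bottom row runs under the leaves, it can only continue along the bottom row, dragging the rungs
along. In the reversed orientation this would send the non-leaf `(0, true)` onto a leaf; in the
correct one it gives the shift by `m - 1` to the right of `m`, and to the left the shift
propagates through the ladder because the three neighbours of a bottom vertex must go to the
three neighbours of its image. -/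

namespace GammaZ

theorem adj_false_iff {a : ℤ} {w : ℤ × Bool} :
    GammaZ.Adj (a, false) w ↔ w = (a - 1, false) ∨ w = (a + 1, false) ∨ w = (a, true) := by
  obtain ⟨b, _ | _⟩ := w <;> simp [GammaZ, abs_eq] <;> omega

theorem adj_false_false {a b : ℤ} : GammaZ.Adj (a, false) (b, false) ↔ |a - b| = 1 := by
  simp [GammaZ]

theorem adj_rung (a : ℤ) : GammaZ.Adj (a, false) (a, true) :=
  adj_false_iff.2 <| .inr <| .inr rfl

theorem adj_true_true {a b : ℤ} (ha : a ≤ 0) (hb : b ≤ 0) (hab : |a - b| = 1) :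
    GammaZ.Adj (a, true) (b, true) :=
  .inr <| .inr ⟨rfl, rfl, ha, hb, hab⟩

theorem eq_of_adj_true {a : ℤ} {w : ℤ × Bool} (h : GammaZ.Adj (a, true) w) :
    w = (a, false) ∨ w = (a - 1, true) ∨ w = (a + 1, true) := by
  obtain ⟨b, _ | _⟩ := w <;> simp_all [GammaZ, abs_eq]
  omega

theorem eq_of_adj_leaf {c : ℤ} {w : ℤ × Bool} (hc : 1 ≤ c) (h : GammaZ.Adj (c, true) w) :
    w = (c, false) := by
  obtain ⟨b, _ | _⟩ := w <;> simp_all [GammaZ]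
  omega

section InjectiveHom

variable {f : GammaZ →g GammaZ}

theorem exists_eq_leaf_of_apply_eq_leaf (hf : Function.Injective f) {v : ℤ × Bool} {c : ℤ}
    (hc : 1 ≤ c) (hv : f v = (c, true)) : ∃ b, 1 ≤ b ∧ v = (b, true) := by
  have adj_unique : ∀ u w, GammaZ.Adj v u → GammaZ.Adj v w → u = w := fun u w hu hw =>
    hf <| (eq_of_adj_leaf hc (hv ▸ f.map_adj hu)).trans
      (eq_of_adj_leaf hc (hv ▸ f.map_adj hw)).symm
  obtain ⟨b, _ | _⟩ := v
  · have := adj_unique (b - 1, false) (b + 1, false) (by simp [adj_false_false])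
      (by simp [adj_false_false])
    simp at this
    omega
  · refine ⟨b, ?_, rfl⟩
    by_contra! hb
    have := adj_unique (b, false) (b - 1, true) (adj_rung b).symm
      (adj_true_true (by omega) (by omega) (by simp))
    simp at this

theorem leaf_step (hf : Function.Injective f) {a ε c : ℤ} (hε : |ε| = 1) (hc : 1 ≤ c)
    (h₀ : f (a - ε, false) = (c - 1, false)) (h₁ : f (a, false) = (c, false)) :
    f (a + ε, false) = (c + 1, false) ∧ f (a, true) = (c, true) := by
  have hε₀ : ε ≠ 0 := by rintro rfl; simp at hε
  have hnext : f (a + ε, false) = (c + 1, false) := by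
    have hadj : GammaZ.Adj (a, false) (a + ε, false) := adj_false_false.2 (by simpa using hε)
    rcases adj_false_iff.1 (h₁ ▸ f.map_adj hadj) with h | h | h
    · exact absurd (hf (h.trans h₀.symm)) (by simp; omega)
    · exact h
    · obtain ⟨b, -, hb⟩ := exists_eq_leaf_of_apply_eq_leaf hf hc h
      simp at hb
  refine ⟨hnext, ?_⟩
  rcases adj_false_iff.1 (h₁ ▸ f.map_adj (adj_rung a)) with h | h | h
  · exact absurd (hf (h.trans h₀.symm)) (by simp)
  · exact absurd (hf (h.trans hnext.symm)) (by simp)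
  · exact h

theorem leaf_propagation (hf : Function.Injective f) {a ε c : ℤ} (hε : |ε| = 1) (hc : 1 ≤ c)
    (h₀ : f (a - ε, false) = (c - 1, false)) (h₁ : f (a, false) = (c, false)) (k : ℕ)
    (x : Bool) : f (a + k * ε, x) = (c + k, x) := by
  have bottom : ∀ k : ℕ,
      f (a + k * ε - ε, false) = (c + k - 1, false) ∧
        f (a + k * ε, false) = (c + k, false) := by
    intro k
    induction k with
    | zero => simpa using ⟨h₀, h₁⟩
    | succ k ih =>
      simp only [Nat.cast_succ, add_mul, one_mul, ← add_assoc, add_sub_cancel_right]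
      exact ⟨ih.2, (leaf_step hf hε (by omega) ih.1 ih.2).1⟩
  obtain ⟨hprev, hk⟩ := bottom k
  cases x
  · exact hk
  · exact (leaf_step hf hε (by omega) hprev hk).2

theorem ladder_step (hf : Function.Injective f) {a c : ℤ}
    (h₀ : f (a + 1, false) = (c + 1, false)) (h₁ : f (a, false) = (c, false))
    (h₂ : f (a, true) = (c, true)) :
    f (a - 1, false) = (c - 1, false) ∧ f (a - 1, true) = (c - 1, true) := by
  have hprev : f (a - 1, false) = (c - 1, false) := by
    have hadj : GammaZ.Adj (a, false) (a - 1, false) := adj_false_false.2 (by simp)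
    rcases adj_false_iff.1 (h₁ ▸ f.map_adj hadj) with h | h | h
    · exact h
    · exact absurd (hf (h.trans h₀.symm)) (by simp; omega)
    · exact absurd (hf (h.trans h₂.symm)) (by simp)
  refine ⟨hprev, ?_⟩
  rcases adj_false_iff.1 (hprev ▸ f.map_adj (adj_rung (a - 1))) with h | h | h
  · -- then `f (a - 2, true)` and `f (a - 3, false)` are both forced onto `(c - 2, true)`
    exfalso
    have hbelow : f (a - 2, false) = (c - 1, true) := by
      have hadj : GammaZ.Adj (a - 1, false) (a - 2, false) := adj_false_false.2 (by norm_num)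
      rcases adj_false_iff.1 (hprev ▸ f.map_adj hadj) with h' | h' | h'
      · exact absurd (hf (h'.trans h.symm)) (by simp)
      · rw [sub_add_cancel] at h'
        exact absurd (hf (h'.trans h₁.symm)) (by simp)
      · simpa using h'
    have forced : ∀ u, GammaZ.Adj (a - 2, false) u → u ≠ (a - 1, false) →
        u ≠ (a, true) → f u = (c - 1 - 1, true) := by
      intro u hu hu₁ hu₂
      rcases eq_of_adj_true (hbelow ▸ f.map_adj hu) with h' | h' | h'
      · exact absurd (hf (h'.trans hprev.symm)) hu₁
      · exact h'
      · rw [sub_add_cancel] at h'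
        exact absurd (hf (h'.trans h₂.symm)) hu₂
    have := hf <| (forced _ (adj_rung _) (by simp) (by simp)).trans
      (forced (a - 3, false) (adj_false_false.2 (by norm_num)) (by simp) (by simp)).symm
    simp at this
  · rw [sub_add_cancel] at h
    exact absurd (hf (h.trans h₁.symm)) (by simp)
  · exact h

theorem ladder_propagation (hf : Function.Injective f) {a c : ℤ}
    (h₀ : f (a + 1, false) = (c + 1, false)) (h₁ : f (a, false) = (c, false))
    (h₂ : f (a, true) = (c, true)) (k : ℕ) (x : Bool) : f (a - k, x) = (c - k, x) := by
  have ladder : ∀ k : ℕ, f (a - k + 1, false) = (c - k + 1, false) ∧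
      f (a - k, false) = (c - k, false) ∧ f (a - k, true) = (c - k, true) := by
    intro k
    induction k with
    | zero => simpa using ⟨h₀, h₁, h₂⟩
    | succ k ih =>
      obtain ⟨h₀', h₁', h₂'⟩ := ih
      simp only [Nat.cast_succ, ← sub_sub, sub_add_cancel]
      exact ⟨h₁', ladder_step hf h₀' h₁' h₂'⟩
  obtain ⟨-, hf', ht'⟩ := ladder k
  cases x
  · exact hf'
  · exact ht'

theorem exists_shift_of_bijective (hf : Function.Bijective f) :
    ∃ n : ℕ, ∀ v : ℤ × Bool, f v = (v.1 - n, v.2) := by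
  obtain ⟨hinj, hsurj⟩ := hf
  obtain ⟨v, hv⟩ := hsurj (1, true)
  obtain ⟨m, hm, rfl⟩ := exists_eq_leaf_of_apply_eq_leaf hinj le_rfl hv
  have hmf : f (m, false) = (1, false) :=
    eq_of_adj_leaf le_rfl (hv ▸ f.map_adj (adj_rung m).symm)
  have hside : ∀ b, |m - b| = 1 → f (b, false) = (0, false) ∨ f (b, false) = (2, false) := by
    intro b hb
    rcases adj_false_iff.1 (hmf ▸ f.map_adj (adj_false_false.2 hb)) with h | h | h
    · exact .inl (by simpa using h)
    · exact .inr (by simpa [one_add_one_eq_two] using h)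
    · exact absurd (hinj (h.trans hv.symm)) (by simp)
  rcases hside (m - 1) (by simp) with hl | hl <;> rcases hside (m + 1) (by simp) with hr | hr
  · exact absurd (hinj (hl.trans hr.symm)) (by simp; omega)
  · refine ⟨(m - 1).toNat, ?_⟩
    rintro ⟨b, x⟩
    rcases le_total m b with hb | hb
    · have := leaf_propagation hinj (ε := 1) (by simp) le_rfl (by simpa using hl) hmf
        (b - m).toNat x
      rw [show m + ((b - m).toNat : ℤ) * 1 = b by omega] at this
      simp only [this, Prod.mk.injEq, and_true]
      omega
    · have := ladder_propagation hinj (by simpa [one_add_one_eq_two] using hr) hmf hv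
        (m - b).toNat x
      rw [show m - ((m - b).toNat : ℤ) = b by omega] at this
      simp only [this, Prod.mk.injEq, and_true]
      omega
  · have := leaf_propagation hinj (ε := -1) (by simp) le_rfl (by simpa using hr) hmf m.toNat true
    obtain ⟨b, hb, hb'⟩ := exists_eq_leaf_of_apply_eq_leaf hinj (by omega) this
    simp at hb'
    omega
  · exact absurd (hinj (hl.trans hr.symm)) (by simp; omega)

end InjectiveHom

def shift (n : ℕ) : GammaZ →g GammaZ where
  toFun v := (v.1 - n, v.2)
  map_rel' := by
    rintro ⟨a, _ | _⟩ ⟨b, _ | _⟩ h <;> simp_all [GammaZ]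
    omega

@[simp]
theorem shift_apply (n : ℕ) (v : ℤ × Bool) : shift n v = (v.1 - n, v.2) := rfl

theorem shift_bijective (n : ℕ) : Function.Bijective (shift n) :=
  ((Equiv.subRight (n : ℤ)).prodCongr (Equiv.refl Bool)).bijective

theorem preservesAdj_iff_exists_shift (β : ℤ × Bool → ℤ × Bool)
    (hβ : Function.Bijective β) :
    (∀ v w, GammaZ.Adj v w → GammaZ.Adj (β v) (β w)) ↔
      ∃ n : ℕ, ∀ v : ℤ × Bool, β v = (v.1 - n, v.2) := by
  refine ⟨fun hadj => exists_shift_of_bijective (f := ⟨β, hadj _ _⟩) hβ, ?_⟩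
  rintro ⟨n, hn⟩ v w h
  rw [hn, hn]
  exact (shift n).map_adj h

def shiftMonoidHom : Multiplicative ℕ →* biSubmonoid GammaZ where
  toFun n := ⟨⇑(shift n.toAdd), shift_bijective _, fun _ _ h => (shift _).map_adj h⟩
  map_one' := Subtype.ext <| funext fun v => by
    change (_, _) = v
    simp
  map_mul' a b := Subtype.ext <| funext fun v => by
    change _ = shift _ (shift _ v)
    simp only [shift_apply, toAdd_mul, Nat.cast_add, Prod.mk.injEq, and_true]
    ring

theorem shiftMonoidHom_injective : Function.Injective shiftMonoidHom := fun a b h => by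
  have := congrArg (fun g : biSubmonoid GammaZ => (g.1 (0, false)).1) h
  simpa [shiftMonoidHom] using this

theorem shiftMonoidHom_surjective : Function.Surjective shiftMonoidHom := by
  rintro ⟨β, hβ, hadj⟩
  obtain ⟨n, hn⟩ := (preservesAdj_iff_exists_shift β hβ).1 hadj
  exact ⟨.ofAdd n, Subtype.ext <| funext fun v => (hn v).symm⟩

end GammaZ

/-- A bijection of the vertex set of `GammaZ` is a bimorphism if and only if it is a
downward shift `(a,x) ↦ (a - n, x)` for some `n ∈ ℕ`; consequently the bimorphism
monoid of `GammaZ` is isomorphic to the additive monoid `(ℕ, +)`. -/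
theorem gammaZ_bimorphism_monoid_eq_nat :
    (∀ β : ℤ × Bool → ℤ × Bool, Function.Bijective β →
      ((∀ v w, GammaZ.Adj v w → GammaZ.Adj (β v) (β w)) ↔
        ∃ n : ℕ, ∀ v : ℤ × Bool, β v = (v.1 - n, v.2))) ∧
    Nonempty (biSubmonoid GammaZ ≃* Multiplicative ℕ) :=
  ⟨GammaZ.preservesAdj_iff_exists_shift, ⟨(MulEquiv.ofBijective GammaZ.shiftMonoidHom
    ⟨GammaZ.shiftMonoidHom_injective, GammaZ.shiftMonoidHom_surjective⟩).symm⟩⟩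
end

section
/- A monoid M is isomorphic to the bimorphism monoid of some simple graph if and only if M embeds into a group; that is, there exist a vertex type V and a simple graph Γ on V with Bi(Γ) ≅ M if and only if there exist a group G and an injective monoid homomorphism from M into G. -/
/-!
A monoid embedded in a group `G` is a submonoid `S ≤ G`; we build a graph whose bimorphisms are
exactly the left translations by elements of `S`. Vertices `base g` (`g ∈ G`) are joined, through a
triangle `base g – label g t – arrow g t`, to `base (g * q)` for every tag `t = (q, n)`. Alongside
sits a rigid *frame*: three layers indexed by the initial well-order of `κ`, the number of tags,
with layer `a` joined upwards to layer `a + 1`. Every tag names one vertex of layer `0`, to which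
the gadgets carrying that tag are attached, and one extra tag marks the `base g` with `g ∈ S`.

A bijective homomorphism `f` maps vertices on triangles, and vertices of degree `κ`, to vertices
of the same kind. Each frame vertex lies on no triangle and has `κ` neighbours of degree `κ`,
unlike all other vertices, so `f` maps the frame into itself and the rest into the rest. It
preserves layer `0`, the only one touching the gadgets, hence each layer; by well-founded induction
it can only increase indices, so surjectivity makes it fix the frame pointwise. The tags then force
`f (base g) = base (c * g)` where `f (base 1) = base c`, and the marker of `S` forces `c ∈ S`.
-/

open Cardinal Ordinal Function Set

universe u

theorem eq_id_of_surjective_of_le {α : Type*} [PartialOrder α] [WellFoundedLT α] {σ : α → α}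
    (hσ : Surjective σ) (hle : ∀ i, i ≤ σ i) : σ = id := by
  funext i
  induction i using WellFoundedLT.induction with
  | ind i ih =>
    obtain ⟨k, hk⟩ := hσ i
    obtain hlt | rfl := (hk ▸ hle k).lt_or_eq
    · exact absurd (hk.symm.trans (ih k hlt)) hlt.ne'
    · exact hk

theorem mk_Ioi_eq {α : Type u} [LinearOrder α] [WellFoundedLT α] [Infinite α]
    (h : (#α).ord = typeLT α) (i : α) : #(Ioi i) = #α := by
  rw [← compl_Iic, mk_compl_of_infinite _ (mk_Iic_lt i h (aleph0_le_mk α))]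

namespace SimpleGraph

variable {V W : Type u} {Γ : SimpleGraph V} {Δ : SimpleGraph W}

theorem Hom.mk_neighborSet_le (f : Γ →g Δ) (hf : Injective f) (v : V) :
    #(Γ.neighborSet v) ≤ #(Δ.neighborSet (f v)) :=
  mk_le_of_injective (f := fun w => ⟨f w, f.map_adj w.2⟩)
    fun _ _ h => Subtype.ext (hf (congrArg Subtype.val h))

def InTriangle (Γ : SimpleGraph V) (v : V) : Prop :=
  ∃ x y, Γ.Adj v x ∧ Γ.Adj x y ∧ Γ.Adj y v

theorem InTriangle.map (f : Γ →g Δ) {v : V} : Γ.InTriangle v → Δ.InTriangle (f v) :=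
  fun ⟨x, y, hx, hxy, hy⟩ => ⟨f x, f y, f.map_adj hx, f.map_adj hxy, f.map_adj hy⟩

end SimpleGraph

noncomputable def biSubmonoidToPerm {V : Type*} (Γ : SimpleGraph V) :
    biSubmonoid Γ →* Equiv.Perm V where
  toFun F := Equiv.ofBijective _ F.2.1
  map_one' := Equiv.ext fun _ => rfl
  map_mul' _ _ := Equiv.ext fun _ => rfl

theorem biSubmonoidToPerm_injective {V : Type*} (Γ : SimpleGraph V) :
    Injective (biSubmonoidToPerm Γ) := by
  intro F F' h
  apply Subtype.ext
  funext v
  exact Equiv.congr_fun h v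

namespace Realizer

variable (G : Type u)

/-- A tag `(q, n)` labels the gadgets translating by `q`; the factor `ℕ` only makes the tags
infinitely many. The tags `.inr 0`, `.inr 1`, `.inr 2` mark the bases, the bases in `S`, and the
arrows. -/
abbrev Tag : Type u := (G × ℕ) ⊕ Fin 3

abbrev Idx : Type u := (#(Tag G)).ord.ToType

noncomputable def tagEquiv : Idx G ≃ Tag G :=
  Classical.choice (Cardinal.eq.1 (mk_ord_toType _))

instance [Nonempty G] : Infinite (Idx G) :=
  Cardinal.infinite_iff.2 (by rw [mk_ord_toType]; exact aleph0_le_mk _)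

theorem mk_Ioi_idx [Nonempty G] (i : Idx G) : #(Ioi i) = #(Idx G) :=
  mk_Ioi_eq (by rw [mk_ord_toType, Ordinal.type_toType]) i

theorem mk_Iio_idx_lt (i : Idx G) : #(Iio i) < #(Idx G) :=
  mk_Iio_lt i (by rw [mk_ord_toType, Ordinal.type_toType])

inductive Vertex : Type u
  | frame (a : Fin 3) (i : Idx G)
  | base (g : G)
  | label (g : G) (t : G × ℕ)
  | arrow (g : G) (t : G × ℕ)

variable {G}

namespace Vertex

def IsFrame (v : Vertex G) : Prop := ∃ a i, v = frame a i

end Vertex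

open Vertex

variable [Group G] (S : Submonoid G)

def arc : Vertex G → Vertex G → Prop
  | frame a i, frame b j => b = a + 1 ∧ i < j
  | base g, frame a i => a = 0 ∧ (tagEquiv G i = .inr 0 ∨ tagEquiv G i = .inr 1 ∧ g ∈ S)
  | label _ t, frame a i => a = 0 ∧ tagEquiv G i = .inl t
  | arrow _ _, frame a i => a = 0 ∧ tagEquiv G i = .inr 2
  | label g _, base h => h = g
  | label g t, arrow h s => h = g ∧ s = t
  | arrow g t, base h => h = g ∨ h = g * t.1
  | _, _ => False

def graph : SimpleGraph (Vertex G) where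
  Adj v w := arc S v w ∨ arc S w v
  symm := ⟨fun _ _ => Or.symm⟩
  loopless := ⟨fun v h => by cases v <;> simp [arc] at h⟩

theorem graph_adj {v w : Vertex G} : (graph S).Adj v w ↔ arc S v w ∨ arc S w v := Iff.rfl

noncomputable def anchor (τ : Tag G) : Vertex G := frame 0 ((tagEquiv G).symm τ)

variable {S}

theorem eq_zero_of_adj_frame {a : Fin 3} {i : Idx G} {w : Vertex G} (hw : ¬ w.IsFrame)
    (h : (graph S).Adj (frame a i) w) : a = 0 := by
  cases w <;> simp_all [graph_adj, arc, IsFrame]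

theorem exists_eq_base_of_adj_anchor {w : Vertex G} (hw : ¬ w.IsFrame)
    (h : (graph S).Adj w (anchor (.inr 0))) : ∃ y, w = base y := by
  cases w <;> simp_all [graph_adj, arc, anchor, IsFrame]

theorem eq_label_of_adj {w : Vertex G} {y : G} {t : G × ℕ} (hw : ¬ w.IsFrame)
    (h₁ : (graph S).Adj w (anchor (.inl t))) (h₂ : (graph S).Adj w (base y)) :
    w = label y t := by
  cases w <;> simp_all [graph_adj, arc, anchor, IsFrame]

theorem eq_arrow_of_adj {w : Vertex G} {y : G} {t : G × ℕ} (hw : ¬ w.IsFrame)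
    (h₁ : (graph S).Adj w (anchor (.inr 2))) (h₂ : (graph S).Adj w (label y t)) :
    w = arrow y t := by
  cases w <;> simp_all [graph_adj, arc, anchor, IsFrame]

theorem finite_neighborSet_label (g : G) (t : G × ℕ) :
    ((graph S).neighborSet (label g t)).Finite := by
  refine (toFinite {anchor (.inl t), base g, arrow g t}).subset ?_
  intro w hw
  cases w <;> simp_all [graph_adj, arc, anchor, Equiv.eq_symm_apply]

theorem finite_neighborSet_arrow (g : G) (t : G × ℕ) :
    ((graph S).neighborSet (arrow g t)).Finite := by
  refine (toFinite {anchor (.inr 2), label g t, base g, base (g * t.1)}).subset ?_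
  intro w hw
  cases w <;> simp_all [graph_adj, arc, anchor, Equiv.eq_symm_apply]

theorem not_inTriangle_frame (a : Fin 3) (i : Idx G) : ¬ (graph S).InTriangle (frame a i) := by
  rintro ⟨x, y, hx, hxy, hy⟩
  cases x <;> cases y <;> simp_all [graph_adj, arc]
  rcases hx with ⟨rfl, h1⟩ | ⟨rfl, h1⟩ <;> rcases hy with ⟨h2, h3⟩ | ⟨h2, h3⟩ <;>
    rcases hxy with ⟨h4, h5⟩ | ⟨h4, h5⟩ <;> first | omega | order

theorem inTriangle_of_not_isFrame {v : Vertex G} (hv : ¬ v.IsFrame) : (graph S).InTriangle v := by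
  cases v with
  | frame a i => exact absurd ⟨a, i, rfl⟩ hv
  | base g =>
    exact ⟨label g (1, 0), arrow g (1, 0), Or.inr rfl, Or.inl ⟨rfl, rfl⟩, Or.inl (Or.inl rfl)⟩
  | label g t => exact ⟨arrow g t, base g, Or.inl ⟨rfl, rfl⟩, Or.inl (Or.inl rfl), Or.inr rfl⟩
  | arrow g t => exact ⟨base g, label g t, Or.inl (Or.inl rfl), Or.inr rfl, Or.inl ⟨rfl, rfl⟩⟩

theorem not_isFrame_map (f : graph S →g graph S) {v : Vertex G} (hv : ¬ v.IsFrame) :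
    ¬ (f v).IsFrame := by
  rintro ⟨a, i, h⟩
  exact not_inTriangle_frame a i (h ▸ (inTriangle_of_not_isFrame hv).map f)

theorem exists_adj_frame_zero (i : Idx G) : ∃ w, ¬ w.IsFrame ∧ (graph S).Adj (frame 0 i) w := by
  rcases h : tagEquiv G i with t | τ
  · exact ⟨label 1 t, by simp [IsFrame], Or.inr ⟨rfl, h⟩⟩
  · fin_cases τ
    · exact ⟨base 1, by simp [IsFrame], Or.inr ⟨rfl, Or.inl h⟩⟩
    · exact ⟨base 1, by simp [IsFrame], Or.inr ⟨rfl, Or.inr ⟨h, S.one_mem⟩⟩⟩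
    · exact ⟨arrow 1 (1, 0), by simp [IsFrame], Or.inr ⟨rfl, h⟩⟩

variable (S) in
def Big (v : Vertex G) : Prop := #(Idx G) ≤ #((graph S).neighborSet v)

theorem mk_lt_mk_idx_of_finite {X : Type u} {s : Set X} (hs : s.Finite) : #s < #(Idx G) :=
  hs.lt_aleph0.trans_le (aleph0_le_mk _)

theorem not_big_of_finite {v : Vertex G} (h : ((graph S).neighborSet v).Finite) : ¬ Big S v :=
  (mk_lt_mk_idx_of_finite h).not_ge

theorem big_frame (a : Fin 3) (i : Idx G) : Big S (frame a i) := by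
  rw [Big, ← mk_Ioi_idx G i]
  exact mk_le_of_injective (f := fun j => ⟨frame (a + 1) j, Or.inl ⟨rfl, j.2⟩⟩)
    fun j k h => Subtype.ext (by simpa using congrArg Subtype.val h)

theorem finite_big_neighbors_base (g : G) :
    {w | (graph S).Adj (base g) w ∧ Big S w}.Finite := by
  refine (toFinite {anchor (.inr 0), anchor (.inr 1)}).subset ?_
  rintro w ⟨hw, hbig⟩
  cases w with
  | frame => simp_all [graph_adj, arc, anchor, Equiv.eq_symm_apply]; tauto
  | base => simp [graph_adj, arc] at hw
  | label h t => exact absurd hbig (not_big_of_finite (finite_neighborSet_label h t))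
  | arrow h t => exact absurd hbig (not_big_of_finite (finite_neighborSet_arrow h t))

def translate (c : G) : Vertex G → Vertex G
  | frame a i => frame a i
  | base g => base (c * g)
  | label g t => label (c * g) t
  | arrow g t => arrow (c * g) t

theorem translate_one : translate (1 : G) = id := by
  funext v; cases v <;> simp [translate]

theorem translate_mul (c d : G) : translate (c * d) = translate c ∘ translate d := by
  funext v; cases v <;> simp [translate, mul_assoc]

theorem translate_bijective (c : G) : Bijective (translate c) := by
  refine bijective_iff_has_inverse.2 ⟨translate c⁻¹, fun v => ?_, fun v => ?_⟩
  · rw [← comp_apply (f := translate c⁻¹), ← translate_mul, inv_mul_cancel, translate_one, id]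
  · rw [← comp_apply (f := translate c), ← translate_mul, mul_inv_cancel, translate_one, id]

theorem adj_translate {c : G} (hc : c ∈ S) {v w : Vertex G} (h : (graph S).Adj v w) :
    (graph S).Adj (translate c v) (translate c w) := by
  have hS : ∀ g ∈ S, c * g ∈ S := fun _ => S.mul_mem hc
  cases v <;> cases w <;> simp_all [graph_adj, arc, translate, mul_assoc]
  all_goals exact h.2.imp_right (And.imp_right (hS _))

section Rigidity

variable {f : graph S →g graph S} (hf : Injective f)
include hf

theorem Big.map {v : Vertex G} (hv : Big S v) : Big S (f v) :=
  hv.trans (f.mk_neighborSet_le hf v)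

theorem isFrame_map (a : Fin 3) (i : Idx G) : (f (frame a i)).IsFrame := by
  have hbig := (big_frame (S := S) a i).map hf
  cases hfv : f (frame a i) with
  | frame b j => exact ⟨b, j, rfl⟩
  | base y =>
    have hmem : ∀ j : Ioi i, f (frame (a + 1) j) ∈ {w | (graph S).Adj (base y) w ∧ Big S w} :=
      fun j => ⟨hfv ▸ f.map_adj (Or.inl ⟨rfl, j.2⟩), (big_frame _ _).map hf⟩
    have hle := mk_le_of_injective (f := fun j : Ioi i => (⟨_, hmem j⟩ : {w | _}))
      fun j k h => Subtype.ext (by simpa using hf (congrArg Subtype.val h))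
    rw [mk_Ioi_idx] at hle
    exact absurd hle (mk_lt_mk_idx_of_finite (finite_big_neighbors_base y)).not_ge
  | label y t => exact absurd (hfv ▸ hbig) (not_big_of_finite (finite_neighborSet_label y t))
  | arrow y t => exact absurd (hfv ▸ hbig) (not_big_of_finite (finite_neighborSet_arrow y t))

theorem exists_map_frame_zero (i : Idx G) : ∃ j, f (frame 0 i) = frame 0 j := by
  obtain ⟨w, hw, hadj⟩ := exists_adj_frame_zero (S := S) i
  obtain ⟨b, j, hj⟩ := isFrame_map hf 0 i
  have hb := eq_zero_of_adj_frame (not_isFrame_map f hw) (hj ▸ f.map_adj hadj)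
  exact ⟨j, hb ▸ hj⟩

theorem exists_map_frame_of_succ {a b : Fin 3} (hab : b = a + 1)
    (hb : ∀ j, ∃ k, f (frame b j) = frame b k) (i : Idx G) : ∃ k, f (frame a i) = frame a k := by
  obtain ⟨c, s, hs⟩ := isFrame_map hf a i
  refine ⟨s, ?_⟩
  by_contra hca
  -- Otherwise the `κ` upper neighbours of `frame a i` land in layer `b` below index `s`.
  choose σ hσ using hb
  have hlt : ∀ j : Ioi i, σ j < s := fun j => by
    have := f.map_adj (show (graph S).Adj (frame a i) (frame b j) from Or.inl ⟨hab, j.2⟩)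
    rw [hs, hσ] at this
    rcases this with ⟨h, _⟩ | ⟨_, h⟩
    · exact (hca (by rw [hs, add_right_cancel (hab.symm.trans h)])).elim
    · exact h
  have hle := mk_le_of_injective (f := fun j : Ioi i => (⟨σ j, hlt j⟩ : Iio s))
    fun j k h => by
      have hjk : f (frame b j) = f (frame b k) := by
        rw [hσ, hσ, show σ j = σ k from congrArg Subtype.val h]
      exact Subtype.ext (by simpa using hf hjk)
  rw [mk_Ioi_idx] at hle
  exact hle.not_gt (mk_Iio_idx_lt G s)

theorem exists_map_frame (a : Fin 3) (i : Idx G) : ∃ k, f (frame a i) = frame a k := by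
  have h0 := exists_map_frame_zero hf
  have h2 := exists_map_frame_of_succ hf (a := 2) rfl h0
  have h1 := exists_map_frame_of_succ hf (a := 1) rfl h2
  fin_cases a
  exacts [h0 i, h1 i, h2 i]

theorem le_of_map_frame_eq {a : Fin 3} {i j : Idx G} (h : f (frame a i) = frame a j) : i ≤ j := by
  induction i using WellFoundedLT.induction generalizing a j with
  | ind i ih =>
    by_contra! hji
    obtain ⟨k, hk⟩ := exists_map_frame hf (a + 2) j
    have := f.map_adj (show (graph S).Adj (frame (a + 2) j) (frame a i) from
      Or.inl ⟨by omega, hji⟩)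
    rw [hk, h] at this
    rcases this with ⟨_, hkj⟩ | ⟨hab, _⟩
    · exact (ih j hji hk).not_gt hkj
    · omega

theorem map_frame (hsurj : Surjective f) (a : Fin 3) (i : Idx G) : f (frame a i) = frame a i := by
  choose σ hσ using exists_map_frame hf
  have hσ_surj : Surjective (σ a) := by
    intro i
    obtain ⟨v, hv⟩ := hsurj (frame a i)
    obtain ⟨b, k, rfl⟩ : v.IsFrame := by_contra fun h => not_isFrame_map f h ⟨a, i, hv⟩
    rw [hσ] at hv
    obtain ⟨rfl, rfl⟩ := frame.inj hv
    exact ⟨k, rfl⟩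
  rw [hσ, eq_id_of_surjective_of_le hσ_surj fun k => le_of_map_frame_eq hf (hσ a k), id]

end Rigidity

section Translation

variable {f : graph S →g graph S} (hframe : ∀ a i, f (frame a i) = frame a i)
include hframe

theorem exists_map_base (g : G) : ∃ y, f (base g) = base y := by
  apply exists_eq_base_of_adj_anchor (not_isFrame_map f (by simp [IsFrame]))
  rw [anchor, ← hframe]
  exact f.map_adj (by simp [graph_adj, arc])

theorem map_label {g y : G} (hy : f (base g) = base y) (t : G × ℕ) : f (label g t) = label y t := by
  apply eq_label_of_adj (not_isFrame_map f (by simp [IsFrame]))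
  · rw [anchor, ← hframe]; exact f.map_adj (by simp [graph_adj, arc])
  · rw [← hy]; exact f.map_adj (by simp [graph_adj, arc])

theorem map_arrow {g y : G} (hy : f (base g) = base y) (t : G × ℕ) : f (arrow g t) = arrow y t := by
  apply eq_arrow_of_adj (not_isFrame_map f (by simp [IsFrame]))
  · rw [anchor, ← hframe]; exact f.map_adj (by simp [graph_adj, arc])
  · rw [← map_label hframe hy]; exact f.map_adj (by simp [graph_adj, arc])

theorem map_base_mul (hf : Injective f) {g y : G} (hy : f (base g) = base y) (q : G) :
    f (base (g * q)) = base (y * q) := by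
  obtain ⟨z, hz⟩ := exists_map_base hframe (g * q)
  have := f.map_adj (show (graph S).Adj (arrow g (q, 0)) (base (g * q)) by simp [graph_adj, arc])
  rw [map_arrow hframe hy, hz] at this
  rcases this with (rfl | rfl) | h
  · obtain rfl : q = 1 := by simpa using hf (hz.trans hy.symm)
    simpa using hz
  · exact hz
  · exact h.elim

end Translation

theorem exists_mem_eq_translate {f : graph S →g graph S} (hf : Bijective f) :
    ∃ c ∈ S, ⇑f = translate c := by
  have hframe := map_frame hf.1 hf.2
  obtain ⟨c, hc⟩ := exists_map_base hframe 1
  have hbase g : f (base g) = base (c * g) := by simpa using map_base_mul hframe hf.1 hc g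
  refine ⟨c, ?_, funext fun v => ?_⟩
  · have := f.map_adj (show (graph S).Adj (base 1) (anchor (.inr 1)) by
      simp [graph_adj, arc, anchor])
    rw [hc, anchor, hframe] at this
    simpa [graph_adj, arc] using this
  · cases v with
    | frame a i => exact hframe a i
    | base g => exact hbase g
    | label g t => exact map_label hframe (hbase g) t
    | arrow g t => exact map_arrow hframe (hbase g) t

variable (S) in
def translateHom : S →* biSubmonoid (graph S) where
  toFun c := ⟨translate (c : G), translate_bijective _, fun _ _ => adj_translate c.2⟩
  map_one' := Subtype.ext (translate_one (G := G))
  map_mul' c d := Subtype.ext (translate_mul (c : G) d)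

theorem translateHom_injective : Injective (translateHom S) := fun c d h => by
  have := congrFun (congrArg Subtype.val h) (base 1)
  simpa [translateHom, translate] using this

theorem translateHom_surjective : Surjective (translateHom S) := by
  rintro ⟨F, hbij, hadj⟩
  obtain ⟨c, hc, hF⟩ := exists_mem_eq_translate (f := ⟨F, hadj _ _⟩) hbij
  exact ⟨⟨c, hc⟩, Subtype.ext hF.symm⟩

variable (S) in
noncomputable def biSubmonoidEquiv : biSubmonoid (graph S) ≃* S :=
  (MulEquiv.ofBijective _ ⟨translateHom_injective, translateHom_surjective⟩).symm

end Realizer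

/-- A monoid is isomorphic to the bimorphism monoid of some simple graph if and only
if it embeds into a group. -/
theorem iso_bimorphism_monoid_iff_embeds_into_group {M : Type u} [Monoid M] :
    (∃ (V : Type u) (Γ : SimpleGraph V), Nonempty (biSubmonoid Γ ≃* M)) ↔
    (∃ (G : Type u) (_ : Group G) (φ : M →* G), Function.Injective φ) := by
  constructor
  · rintro ⟨V, Γ, ⟨e⟩⟩
    exact ⟨Equiv.Perm V, inferInstance, (biSubmonoidToPerm Γ).comp e.symm.toMonoidHom,
      (biSubmonoidToPerm_injective Γ).comp e.symm.injective⟩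
  · rintro ⟨G, _, φ, hφ⟩
    have hrange : M ≃* MonoidHom.mrange φ := MulEquiv.ofBijective φ.mrangeRestrict
      ⟨fun m n h => hφ (congrArg Subtype.val h), φ.mrangeRestrict_surjective⟩
    exact ⟨_, Realizer.graph (MonoidHom.mrange φ),
      ⟨(Realizer.biSubmonoidEquiv _).trans hrange.symm⟩⟩
end
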